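/- arXiv:2303.09179 — 2 statements merged into one kernel-verified Lean document; each statement's English description precedes it below -/
import Mathlib

section
/- Let Γ = {(k,m,n) ∈ (ℤ³\{0})³ : k+m+n = 0 and ±k₃/|k| ± m₃/|m| ± n₃/|n| = 0 for some choice of signs}, and let χ be its indicator (as a function of (k,n) with m = −k−n). Then for every i ≥ 0, sup_{n ∈ ℤ³\{0}} ∑_{k ∈ S_i} χ(k, −k−n, n)·|k|^{-1} ≤ C₀·2^i for an absolute constant C₀, where S_i = {k ∈ ℤ³\{0} : 2^i ≤ |k| < 2^{i+1}}. -/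
/-- Euclidean norm of a lattice point in ℤ³. -/
noncomputable def znorm (k : Fin 3 → ℤ) : ℝ := Real.sqrt (∑ i, ((k i : ℝ))^2)

/-- The resonance condition on a triple (k, m, n) of nonzero lattice points:
±k₃/|k| ± m₃/|m| ± n₃/|n| = 0 for some choice of signs. -/
def Resonant (k m n : Fin 3 → ℤ) : Prop :=
  k ≠ 0 ∧ m ≠ 0 ∧ n ≠ 0 ∧ k + m + n = 0 ∧
  ∃ σ₁ σ₂ σ₃ : ℝ, (σ₁ = 1 ∨ σ₁ = -1) ∧ (σ₂ = 1 ∨ σ₂ = -1) ∧ (σ₃ = 1 ∨ σ₃ = -1) ∧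
    σ₁ * (k 2 : ℝ) / znorm k + σ₂ * (m 2 : ℝ) / znorm m + σ₃ * (n 2 : ℝ) / znorm n = 0

/-
Each k with 2^i ≤ |k| < 2^(i+1) contributes at most 2^(-i), so it suffices to show that at most
O(4^i) lattice points k with |kⱼ| ≤ 2^(i+1) are resonant. With x = k₃/|k|, y = m₃/|m|, z = n₃/|n|,
eliminating the signs from ±x ± y ± z = 0 gives (x² + y² - z²)² = 4x²y², and clearing denominators
turns this into an integer polynomial identity. For fixed (k₁, k₂) it is an equation of degree 8 in
k₃ with leading coefficient n₃²(n₃² - 4|n|²), which is nonzero when n₃ ≠ 0: each column of the box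
holds at most 8 resonant points. When n₃ = 0 the identity degenerates to k₃²(|k + n|² - |k|²) = 0,
so k lies on the plane k₃ = 0 or on the plane 2k·n + |n|² = 0, and each plane meets the box in
O(4^i) points.
-/

open Finset Polynomial

def znormSq (k : Fin 3 → ℤ) : ℤ := k 0 ^ 2 + k 1 ^ 2 + k 2 ^ 2

lemma ext_fin_three {k k' : Fin 3 → ℤ} (h₀ : k 0 = k' 0) (h₁ : k 1 = k' 1) (h₂ : k 2 = k' 2) :
    k = k' :=
  funext fun j => by fin_cases j <;> assumption

lemma znorm_sq (k : Fin 3 → ℤ) : znorm k ^ 2 = znormSq k := by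
  rw [znorm, Real.sq_sqrt (by positivity), Fin.sum_univ_three, znormSq]
  push_cast
  ring

lemma znorm_pos {k : Fin 3 → ℤ} (hk : k ≠ 0) : 0 < znorm k := by
  obtain ⟨j, hj⟩ := Function.ne_iff.mp hk
  have hj' : (k j : ℝ) ≠ 0 := by exact_mod_cast hj
  exact Real.sqrt_pos.mpr
    (sum_pos' (fun i _ => by positivity) ⟨j, mem_univ j, by positivity⟩)

lemma znormSq_pos {k : Fin 3 → ℤ} (hk : k ≠ 0) : 0 < znormSq k := by
  have : (0 : ℝ) < znormSq k := by rw [← znorm_sq]; exact pow_pos (znorm_pos hk) 2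
  exact_mod_cast this

lemma abs_apply_le_znorm (k : Fin 3 → ℤ) (j : Fin 3) : |(k j : ℝ)| ≤ znorm k :=
  Real.abs_le_sqrt (single_le_sum (f := fun i => ((k i : ℝ)) ^ 2)
    (fun i _ => by positivity) (mem_univ j))

lemma sq_add_sq_sub_sq_sq_eq {σ₁ σ₂ σ₃ x y z : ℝ} (h₁ : σ₁ ^ 2 = 1) (h₂ : σ₂ ^ 2 = 1)
    (h₃ : σ₃ ^ 2 = 1) (h : σ₁ * x + σ₂ * y + σ₃ * z = 0) :
    (x ^ 2 + y ^ 2 - z ^ 2) ^ 2 = 4 * x ^ 2 * y ^ 2 := by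
  have hz : z ^ 2 = x ^ 2 + y ^ 2 + 2 * σ₁ * σ₂ * x * y := by
    linear_combination (σ₃ * z - σ₁ * x - σ₂ * y) * h - z ^ 2 * h₃ + x ^ 2 * h₁ + y ^ 2 * h₂
  rw [hz]
  linear_combination 4 * x ^ 2 * y ^ 2 * (σ₂ ^ 2 * h₁ + h₂)

theorem Resonant.znormSq_identity {k m n : Fin 3 → ℤ} (h : Resonant k m n) :
    (znormSq n * (k 2 ^ 2 * znormSq m + m 2 ^ 2 * znormSq k) - n 2 ^ 2 * znormSq k * znormSq m) ^ 2
      = 4 * znormSq n ^ 2 * k 2 ^ 2 * m 2 ^ 2 * znormSq k * znormSq m := by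
  obtain ⟨hk, hm, hn, -, σ₁, σ₂, σ₃, h₁, h₂, h₃, hσ⟩ := h
  simp only [mul_div_assoc] at hσ
  have key := sq_add_sq_sub_sq_sq_eq (sq_eq_one_iff.2 h₁) (sq_eq_one_iff.2 h₂)
    (sq_eq_one_iff.2 h₃) hσ
  have hK : (znormSq k : ℝ) ≠ 0 := by exact_mod_cast (znormSq_pos hk).ne'
  have hM : (znormSq m : ℝ) ≠ 0 := by exact_mod_cast (znormSq_pos hm).ne'
  have hN : (znormSq n : ℝ) ≠ 0 := by exact_mod_cast (znormSq_pos hn).ne'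
  simp only [div_pow, znorm_sq] at key
  field_simp at key
  rify
  linear_combination key

theorem Resonant.third_eq_zero_or_of_third_eq_zero {k n : Fin 3 → ℤ} (h : Resonant k (-k - n) n)
    (hn₂ : n 2 = 0) : k 2 = 0 ∨ 2 * (k 0 * n 0 + k 1 * n 1) + n 0 ^ 2 + n 1 ^ 2 = 0 := by
  have key := h.znormSq_identity
  have hN : znormSq n = n 0 ^ 2 + n 1 ^ 2 := by simp [znormSq, hn₂]
  rw [hN] at key
  simp only [znormSq, Pi.sub_apply, Pi.neg_apply, hn₂] at key
  have hprod :
      (znormSq n * k 2 ^ 2 * (2 * (k 0 * n 0 + k 1 * n 1) + n 0 ^ 2 + n 1 ^ 2)) ^ 2 = 0 := by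
    rw [hN]
    linear_combination key
  simpa [(znormSq_pos h.2.2.1).ne'] using hprod

/-- Clearing the denominators of `(x² + y² - z²)² = 4x²y²` for `x = k₃/|k|`, `y = m₃/|m|`,
`z = n₃/|n|`, where `k = (p.1, p.2, X)` and `m = -k - n`. -/
noncomputable def resonancePoly (n : Fin 3 → ℤ) (p : ℤ × ℤ) : ℤ[X] :=
  let K := X ^ 2 + C (p.1 ^ 2 + p.2 ^ 2)
  let M := (X + C (n 2)) ^ 2 + C ((p.1 + n 0) ^ 2 + (p.2 + n 1) ^ 2)
  (C (znormSq n) * (X ^ 2 * M + (X + C (n 2)) ^ 2 * K) - C (n 2 ^ 2) * K * M) ^ 2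
    - C (4 * znormSq n ^ 2) * X ^ 2 * (X + C (n 2)) ^ 2 * K * M

theorem Resonant.isRoot_resonancePoly {k n : Fin 3 → ℤ} (h : Resonant k (-k - n) n) :
    (resonancePoly n (k 0, k 1)).IsRoot (k 2) := by
  have key := h.znormSq_identity
  simp only [znormSq, Pi.sub_apply, Pi.neg_apply] at key
  simp only [resonancePoly, IsRoot, eval_sub, eval_mul, eval_pow, eval_add, eval_C, eval_X, znormSq]
  linear_combination key

theorem natDegree_resonancePoly {n : Fin 3 → ℤ} (hn : n 2 ≠ 0) (p : ℤ × ℤ) :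
    (resonancePoly n p).natDegree = 8 := by
  dsimp only [resonancePoly]
  compute_degree!
  have : 0 < n 2 ^ 2 := by positivity
  simp only [znormSq]
  nlinarith [sq_nonneg (n 0), sq_nonneg (n 1)]

section Counting

variable {S : Finset (Fin 3 → ℤ)} {R : ℕ}

theorem card_le_of_card_fiber_le (hS : ∀ k ∈ S, ∀ j, |k j| ≤ R) (j l : Fin 3) (d : ℕ)
    (hd : ∀ p : ℤ × ℤ, #{k ∈ S | (k j, k l) = p} ≤ d) : #S ≤ d * (2 * R + 1) ^ 2 := by
  have hsquare : #(Icc (-(R : ℤ)) R ×ˢ Icc (-(R : ℤ)) R) = (2 * R + 1) ^ 2 := by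
    rw [card_product, Int.card_Icc, sq]
    congr 1 <;> omega
  rw [← hsquare]
  refine card_le_mul_card_image_of_maps_to (fun k hk => ?_) d fun p _ => hd p
  exact mem_product.2 ⟨mem_Icc.2 (abs_le.1 (hS k hk j)), mem_Icc.2 (abs_le.1 (hS k hk l))⟩

variable {n : Fin 3 → ℤ} (hn : n ≠ 0) (hres : ∀ k ∈ S, Resonant k (-k - n) n)
  (hS : ∀ k ∈ S, ∀ j, |k j| ≤ R)
include hn hres hS

theorem card_resonant_le_of_third_eq_zero (hn₂ : n 2 = 0) : #S ≤ 2 * (2 * R + 1) ^ 2 := by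
  set L : Finset (Fin 3 → ℤ) := {k ∈ S | 2 * (k 0 * n 0 + k 1 * n 1) + n 0 ^ 2 + n 1 ^ 2 = 0}
  have hplane : #{k ∈ S | k 2 = 0} ≤ 1 * (2 * R + 1) ^ 2 := by
    refine card_le_of_card_fiber_le (fun k hk => hS k (mem_filter.1 hk).1) 0 1 1 fun p => ?_
    refine card_le_one.2 fun k hk k' hk' => ?_
    simp only [mem_filter, Prod.ext_iff] at hk hk'
    exact ext_fin_three (hk.2.1.trans hk'.2.1.symm) (hk.2.2.trans hk'.2.2.symm)
      (hk.1.2.trans hk'.1.2.symm)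
  have hline : #L ≤ 1 * (2 * R + 1) ^ 2 := by
    have hn' : n 0 ≠ 0 ∨ n 1 ≠ 0 := by
      by_contra! h
      exact hn (ext_fin_three h.1 h.2 hn₂)
    rcases hn' with hn₀ | hn₁
    · refine card_le_of_card_fiber_le (fun k hk => hS k (mem_filter.1 hk).1) 1 2 1 fun p => ?_
      refine card_le_one.2 fun k hk k' hk' => ?_
      simp only [mem_filter, Prod.ext_iff] at hk hk'
      have h₁ := hk.2.1.trans hk'.2.1.symm
      refine ext_fin_three ?_ h₁ (hk.2.2.trans hk'.2.2.symm)
      have : 2 * n 0 * (k 0 - k' 0) = 0 := by linear_combination hk.1.2 - hk'.1.2 - 2 * n 1 * h₁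
      simpa [hn₀, sub_eq_zero] using this
    · refine card_le_of_card_fiber_le (fun k hk => hS k (mem_filter.1 hk).1) 0 2 1 fun p => ?_
      refine card_le_one.2 fun k hk k' hk' => ?_
      simp only [mem_filter, Prod.ext_iff] at hk hk'
      have h₀ := hk.2.1.trans hk'.2.1.symm
      refine ext_fin_three h₀ ?_ (hk.2.2.trans hk'.2.2.symm)
      have : 2 * n 1 * (k 1 - k' 1) = 0 := by linear_combination hk.1.2 - hk'.1.2 - 2 * n 0 * h₀
      simpa [hn₁, sub_eq_zero] using this
  have hcover : S ⊆ {k ∈ S | k 2 = 0} ∪ L := fun k hk => by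
    rcases (hres k hk).third_eq_zero_or_of_third_eq_zero hn₂ with h | h
    · exact mem_union_left _ (mem_filter.2 ⟨hk, h⟩)
    · exact mem_union_right _ (mem_filter.2 ⟨hk, h⟩)
  calc #S ≤ #{k ∈ S | k 2 = 0} + #L := (card_le_card hcover).trans (card_union_le _ _)
    _ ≤ 2 * (2 * R + 1) ^ 2 := by omega

theorem card_resonant_le : #S ≤ 8 * (2 * R + 1) ^ 2 := by
  by_cases hn₂ : n 2 = 0
  · have := card_resonant_le_of_third_eq_zero hn hres hS hn₂
    omega
  refine card_le_of_card_fiber_le hS 0 1 8 fun p => ?_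
  have hP : resonancePoly n p ≠ 0 := ne_zero_of_natDegree_gt (n := 0) (by
    rw [natDegree_resonancePoly hn₂]; norm_num)
  calc #{k ∈ S | (k 0, k 1) = p} ≤ #(resonancePoly n p).roots.toFinset := by
        refine card_le_card_of_injOn (fun k => k 2) (fun k hk => ?_) fun k hk k' hk' h => ?_
        · rw [mem_coe, mem_filter] at hk
          rw [mem_coe, Multiset.mem_toFinset, mem_roots hP, ← hk.2]
          exact (hres k hk.1).isRoot_resonancePoly
        · simp only [mem_coe, mem_filter, Prod.ext_iff] at hk hk'
          exact ext_fin_three (hk.2.1.trans hk'.2.1.symm) (hk.2.2.trans hk'.2.2.symm) h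
    _ ≤ (resonancePoly n p).natDegree := (Multiset.toFinset_card_le _).trans (card_roots' _)
    _ = 8 := natDegree_resonancePoly hn₂ p

end Counting

/-- the key dyadic counting estimate: uniformly in n ≠ 0,
∑_{k ∈ S_i, (k,−k−n,n) resonant} |k|⁻¹ ≤ C₀·2^i for an absolute constant C₀. -/
theorem stmt4 :
    ∃ C₀ : ℝ, 0 < C₀ ∧ ∀ (i : ℕ) (n : Fin 3 → ℤ), n ≠ 0 →
      ∑' k : {k : Fin 3 → ℤ // Resonant k (-k - n) n ∧
          (2:ℝ)^i ≤ znorm k ∧ znorm k < 2^(i+1)},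
        (znorm k.1)⁻¹ ≤ C₀ * 2^i := by
  refine ⟨512, by norm_num, fun i n hn => ?_⟩
  refine Real.tsum_le_of_sum_le (fun k => inv_nonneg.2 (Real.sqrt_nonneg _)) fun s => ?_
  have hcard : #s ≤ 8 * (2 * 2 ^ (i + 1) + 1) ^ 2 := by
    rw [← card_map (Function.Embedding.subtype _)]
    refine card_resonant_le hn (fun k hk => ?_) fun k hk j => ?_ <;>
      obtain ⟨k, -, rfl⟩ := mem_map.1 hk
    · exact k.2.1
    · have : |(k.1 j : ℝ)| < 2 ^ (i + 1) := (abs_apply_le_znorm k.1 j).trans_lt k.2.2.2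
      exact_mod_cast this.le
  have h2i : (0 : ℝ) < 2 ^ i := by positivity
  calc ∑ k ∈ s, (znorm k.1)⁻¹ ≤ ∑ _k ∈ s, ((2 : ℝ) ^ i)⁻¹ :=
        sum_le_sum fun k _ => inv_anti₀ h2i k.2.2.1
    _ = #s * ((2 : ℝ) ^ i)⁻¹ := by rw [sum_const, nsmul_eq_mul]
    _ ≤ 8 * (2 * 2 ^ (i + 1) + 1) ^ 2 * ((2 : ℝ) ^ i)⁻¹ := by gcongr; exact_mod_cast hcard
    _ ≤ 8 * (8 * 2 ^ i) ^ 2 * ((2 : ℝ) ^ i)⁻¹ := by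
        gcongr
        linarith [one_le_pow₀ (M₀ := ℝ) one_le_two (n := i), pow_succ (2 : ℝ) i]
    _ = 512 * 2 ^ i := by field_simp; ring
end

section
/- Abstract uniqueness via the 2D-type estimate: Let V ⊂ H ⊂ V' be a Gelfand triple, ν > 0, A : V → V' with ⟨Au, u⟩ = −ν‖u‖_V² (e.g. A = νΔ), and B̃ : V × V → V' bilinear with ⟨B̃(u,v),v⟩ = 0 and |⟨B̃(u,v),u⟩| ≤ C‖u‖_H‖u‖_V‖v‖_V. If u, v ∈ C([0,T]; H) ∩ L²(0,T; V) are two solutions of ∂_t u + B̃(u,u) = νΔu in V' with ∂_t u, ∂_t v ∈ L²(0,T; V') and u(0) = v(0), then u(t) = v(t) for all t ∈ [0,T]. -/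
/-!
With `w = u - v`, the difference equation and the cancellation `⟨B̃(v, w), w⟩ = 0` give
`⟨∂ₜw, w⟩ = -ν‖w‖_V² - ⟨B̃(w, u), w⟩`, and the trilinear estimate with Young's inequality bounds
twice this by `C²/(2ν) ‖u‖_V² ‖w‖_H²`. As `∂ₜw` is only known in `V'`, the energy identity is
replaced by a one-sided one: `s ↦ ⟨w s, w t⟩_H` is differentiable at `t` and
`‖w t‖² - ‖w s‖² ≤ 2 ⟨w t - w s, w t⟩`, which bounds the upper left Dini derivative of `‖w‖_H²`.
A Grönwall argument for Dini derivatives with an `L¹` coefficient (comparison with an integral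
via the Vitali–Carathéodory theorem) then forces `‖w‖_H² ≡ 0`.
-/

open MeasureTheory Set Filter Topology

/-- `UpperLeftDiniLE f t b` encodes `limsup_{s → t⁻} (f t - f s) / (t - s) ≤ b`. -/
def UpperLeftDiniLE (f : ℝ → ℝ) (t b : ℝ) : Prop :=
  ∀ c > b, ∀ᶠ s in 𝓝[<] t, f t - f s ≤ c * (t - s)

theorem UpperLeftDiniLE.mono {f : ℝ → ℝ} {t b b' : ℝ} (h : UpperLeftDiniLE f t b)
    (hb : b ≤ b') : UpperLeftDiniLE f t b' :=
  fun c hc => h c (hb.trans_lt hc)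

theorem upperLeftDiniLE_of_hasDerivAt {f g : ℝ → ℝ} {t d : ℝ} (hg : HasDerivAt g d t)
    (hfg : ∀ᶠ s in 𝓝[<] t, f t - f s ≤ g t - g s) : UpperLeftDiniLE f t d := by
  intro c hc
  filter_upwards [hfg, hg.hasDerivWithinAt.limsup_slope_le' (lt_irrefl t) hc,
    self_mem_nhdsWithin] with s hfgs hslope hst
  rw [slope_def_field, div_lt_iff_of_neg (sub_neg.2 hst)] at hslope
  linarith

theorem eventually_mul_sub_le_integral_of_lt_lowerSemicontinuous {G : ℝ → EReal} {a b t c : ℝ}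
    (hG : LowerSemicontinuous G) (hGint : IntegrableOn (fun x => (G x).toReal) (Icc a b))
    (hGtop : ∀ᵐ x ∂volume.restrict (Icc a b), G x < ⊤) (ht : t ∈ Ioc a b)
    (hc : (c : EReal) < G t) :
    ∀ᶠ z in 𝓝[<] t, c * (t - z) ≤ ∫ y in z..t, (G y).toReal := by
  obtain ⟨l, r, ⟨hl, hr⟩, hlr⟩ :=
    mem_nhds_iff_exists_Ioo_subset.1 (hG.lowerSemicontinuousAt t c hc)
  filter_upwards [Ioo_mem_nhdsLT (max_lt hl ht.1)] with z hz
  have hsub : Icc z t ⊆ Icc a b := Icc_subset_Icc (le_max_right _ _ |>.trans hz.1.le) ht.2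
  calc c * (t - z) = ∫ _ in Icc z t, c := by
        simp [Real.volume_real_Icc_of_le hz.2.le, mul_comm]
    _ ≤ ∫ y in z..t, (G y).toReal := by
        rw [intervalIntegral.integral_of_le hz.2.le, ← integral_Icc_eq_integral_Ioc]
        refine setIntegral_mono_ae_restrict (by simp) (hGint.mono_set hsub) ?_
        filter_upwards [ae_mono (Measure.restrict_mono hsub le_rfl) hGtop,
          ae_restrict_mem measurableSet_Icc] with y hy_top hy
        have hcy : (c : EReal) < G y :=
          hlr ⟨(le_max_left _ _).trans_lt hz.1 |>.trans_le hy.1, hy.2.trans_lt hr⟩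
        exact EReal.coe_le_coe_iff.1 <|
          hcy.le.trans_eq (EReal.coe_toReal hy_top.ne (ne_bot_of_gt hcy)).symm

/- The primitive of `β` is differentiable only almost everywhere; the primitive of a lower
semicontinuous majorant `G` of `β` (Vitali–Carathéodory) has left difference quotients above
`β t` at every `t`, so it can be compared with `f` pointwise. -/
theorem sub_le_integral_of_upperLeftDiniLE {f β : ℝ → ℝ} {a b : ℝ} (hab : a ≤ b)
    (hf : ContinuousOn f (Icc a b)) (hβ : IntegrableOn β (Icc a b))
    (hdini : ∀ t ∈ Ioc a b, UpperLeftDiniLE f t (β t)) :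
    f b - f a ≤ ∫ t in a..b, β t := by
  refine le_of_forall_pos_le_add fun ε hε => ?_
  obtain ⟨G, hβG, hGlsc, hGint, hGtop, hGlt⟩ :=
    exists_lt_lowerSemicontinuous_integral_lt β hβ hε
  have hGint' : IntegrableOn (fun x => (G x).toReal) (Icc a b) := hGint
  have hG_intervalIntegrable : ∀ x y, x ∈ Icc a b → y ∈ Icc a b →
      IntervalIntegrable (fun x => (G x).toReal) volume x y :=
    fun x y hx hy => (hGint'.mono_set (uIcc_subset_Icc hx hy)).intervalIntegrable
  set s := {t | f b - f t ≤ ∫ y in t..b, (G y).toReal} ∩ Icc a b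
  have hs : IsClosed s := by
    have : ContinuousOn (fun t => (f b - f t, ∫ y in t..b, (G y).toReal)) (Icc a b) := by
      rw [← uIcc_of_le hab] at hGint' hf ⊢
      exact (continuousOn_const.sub hf).prodMk
        (intervalIntegral.continuousOn_primitive_interval_left hGint')
    simp only [s, inter_comm]
    exact this.preimage_isClosed_of_isClosed isClosed_Icc OrderClosedTopology.isClosed_le'
  have ha : a ∈ s := by
    refine (hs.inter isClosed_Icc).mem_of_ge_of_forall_exists_lt
      ⟨by simp, right_mem_Icc.2 hab⟩ hab ?_
    rintro x ⟨⟨hxs, -⟩, hx⟩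
    obtain ⟨c, hβc, hcG⟩ := EReal.lt_iff_exists_real_btwn.1 (hβG x)
    obtain ⟨z, hfz, hzG, hz⟩ := ((hdini x hx c (EReal.coe_lt_coe_iff.1 hβc)).and
      ((eventually_mul_sub_le_integral_of_lt_lowerSemicontinuous hGlsc hGint' hGtop hx hcG).and
      (Ioo_mem_nhdsLT hx.1))).exists
    have hzab : z ∈ Icc a b := ⟨hz.1.le, hz.2.le.trans hx.2⟩
    refine ⟨z, ⟨?_, hzab⟩, hz.1.le, hz.2⟩
    show f b - f z ≤ _
    rw [← intervalIntegral.integral_add_adjacent_intervals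
      (hG_intervalIntegrable z x hzab ⟨hx.1.le, hx.2⟩)
      (hG_intervalIntegrable x b ⟨hx.1.le, hx.2⟩ (right_mem_Icc.2 hab))]
    linarith [show f b - f x ≤ _ from hxs]
  have hfa : f b - f a ≤ ∫ y in a..b, (G y).toReal := ha.1
  rw [intervalIntegral.integral_of_le hab, ← integral_Icc_eq_integral_Ioc] at hfa ⊢
  linarith

theorem exists_forall_integral_le_of_intervalIntegrable {m : ℝ → ℝ} {a b x ε : ℝ}
    (hm : IntervalIntegrable m volume a b) (hx : x ∈ Ico a b) (hε : 0 < ε) :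
    ∃ t₀ ∈ Ioo x b, ∀ t ∈ Icc x t₀, ∫ s in x..t, m s ≤ ε := by
  have hlim : Tendsto (fun t => ∫ s in x..t, m s) (𝓝[≥] x) (𝓝 0) := by
    have hmx : IntervalIntegrable m volume (min x x) (max x b) := by
      rw [min_self, max_eq_right hx.2.le]
      exact hm.mono_set (uIcc_subset_uIcc (Icc_subset_uIcc ⟨hx.1, hx.2.le⟩) right_mem_uIcc)
    have := intervalIntegral.continuousWithinAt_primitive (measure_singleton x) hmx
    rwa [ContinuousWithinAt, intervalIntegral.integral_same,
      nhdsWithin_Icc_eq_nhdsGE hx.2] at this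
  obtain ⟨t₀, hxt₀, ht₀⟩ := mem_nhdsGE_iff_exists_Icc_subset.1
    ((hlim.eventually (ge_mem_nhds hε)).and
      (eventually_nhdsWithin_of_eventually_nhds (gt_mem_nhds hx.2)))
  exact ⟨t₀, ⟨hxt₀, (ht₀ (right_mem_Icc.2 hxt₀.le)).2⟩, fun t ht => (ht₀ ht).1⟩

section Gronwall

variable {φ m : ℝ → ℝ} {a b : ℝ}

/- On a short interval `[x, t₀]` where `∫ m ≤ 1/2`, the maximum `M` of `φ` satisfies
`M ≤ M ∫ m ≤ M / 2`. -/
theorem eventually_eq_zero_of_upperLeftDiniLE_mul {x : ℝ}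
    (hφ : ContinuousOn φ (Icc a b)) (hφ0 : ∀ t ∈ Icc a b, 0 ≤ φ t)
    (hm : IntervalIntegrable m volume a b) (hm0 : ∀ t ∈ Ioo a b, 0 ≤ m t)
    (hdini : ∀ t ∈ Ioo a b, UpperLeftDiniLE φ t (m t * φ t)) (hx : x ∈ Ico a b)
    (hφx : φ x = 0) :
    ∀ᶠ t in 𝓝[>] x, φ t = 0 := by
  obtain ⟨t₀, ⟨hxt₀, ht₀b⟩, hsmall⟩ :=
    exists_forall_integral_le_of_intervalIntegrable hm hx one_half_pos
  have hsub : Icc x t₀ ⊆ Icc a b := Icc_subset_Icc hx.1 ht₀b.le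
  have hmI : IntegrableOn m (Icc a b) :=
    (intervalIntegrable_iff_integrableOn_Icc_of_le (hx.1.trans hx.2.le)).1 hm
  obtain ⟨xm, hxm, hmax⟩ :=
    isCompact_Icc.exists_isMaxOn (nonempty_Icc.2 hxt₀.le) (hφ.mono hsub)
  have hM0 : 0 ≤ φ xm := hφx ▸ hmax (left_mem_Icc.2 hxt₀.le)
  have hbound : ∀ t ∈ Icc x t₀, φ t ≤ φ xm / 2 := by
    intro t ht
    have hsubt : Icc x t ⊆ Icc x t₀ := Icc_subset_Icc_right ht.2
    have := sub_le_integral_of_upperLeftDiniLE ht.1 (hφ.mono (hsubt.trans hsub))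
      ((hmI.mono_set (hsubt.trans hsub)).const_mul (φ xm)) (fun τ hτ => ?_)
    · rw [hφx, sub_zero, intervalIntegral.integral_const_mul] at this
      nlinarith [hsmall t ht]
    · have hτab : τ ∈ Ioo a b := ⟨hx.1.trans_lt hτ.1, hτ.2.trans_lt (ht.2.trans_lt ht₀b)⟩
      refine (hdini τ hτab).mono ?_
      rw [mul_comm (φ xm)]
      exact mul_le_mul_of_nonneg_left (hmax ⟨hτ.1.le, hτ.2.trans ht.2⟩) (hm0 τ hτab)
  have hM : φ xm ≤ 0 := by linarith [hbound xm hxm]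
  filter_upwards [Ico_mem_nhdsGT hxt₀] with t ht
  exact le_antisymm ((hmax ⟨ht.1, ht.2.le⟩).trans hM) (hφ0 t (hsub ⟨ht.1, ht.2.le⟩))

theorem eqOn_zero_of_upperLeftDiniLE_mul (hφ : ContinuousOn φ (Icc a b))
    (hφ0 : ∀ t ∈ Icc a b, 0 ≤ φ t) (hφa : φ a = 0)
    (hm : IntervalIntegrable m volume a b) (hm0 : ∀ t ∈ Ioo a b, 0 ≤ m t)
    (hdini : ∀ t ∈ Ioo a b, UpperLeftDiniLE φ t (m t * φ t)) :
    EqOn φ 0 (Icc a b) := by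
  have hs : IsClosed ({t | φ t = 0} ∩ Icc a b) := by
    rw [inter_comm]
    exact hφ.preimage_isClosed_of_isClosed isClosed_Icc isClosed_singleton
  exact fun t ht => hs.Icc_subset_of_forall_mem_nhdsWithin hφa
    (fun x hx => eventually_eq_zero_of_upperLeftDiniLE_mul hφ hφ0 hm hm0 hdini hx.2 hx.1) ht

end Gronwall

theorem norm_sq_sub_norm_sq_le_two_mul_inner {H : Type*} [NormedAddCommGroup H]
    [InnerProductSpace ℝ H] (x y : H) : ‖x‖ ^ 2 - ‖y‖ ^ 2 ≤ 2 * inner ℝ (x - y) x := by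
  have := norm_sub_sq_real x y
  rw [inner_sub_left, real_inner_self_eq_norm_sq, real_inner_comm]
  nlinarith [sq_nonneg ‖x - y‖]

/- `‖h‖²` need not be differentiable, but `s ↦ 2 J (h s) w = 2 ⟨h s, h t⟩` is, and it
dominates the increments of `‖h‖²` from the left of `t`. -/
theorem upperLeftDiniLE_norm_sq_of_hasDerivAt {V H : Type*} [NormedAddCommGroup V]
    [NormedSpace ℝ V] [NormedAddCommGroup H] [InnerProductSpace ℝ H]
    {ι : V →L[ℝ] H} {J : H →L[ℝ] V →L[ℝ] ℝ} (hJ : ∀ (h : H) (w : V), J h w = inner ℝ h (ι w))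
    {h : ℝ → H} {D : V →L[ℝ] ℝ} {t : ℝ} {w : V} (hD : HasDerivAt (fun s => J (h s)) D t)
    (hw : h t = ι w) : UpperLeftDiniLE (fun s => ‖h s‖ ^ 2) t (2 * D w) := by
  have hg : HasDerivAt (fun s => 2 * J (h s) w) (2 * D w) t := by
    simpa using (hD.clm_apply (hasDerivAt_const t w)).const_mul 2
  refine upperLeftDiniLE_of_hasDerivAt hg (Eventually.of_forall fun s => ?_)
  simp only [hJ, ← hw]
  linarith [norm_sq_sub_norm_sq_le_two_mul_inner (h t) (h s),
    inner_sub_left (𝕜 := ℝ) (h t) (h s) (h t)]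

section NavierStokesType

variable {V : Type*} [NormedAddCommGroup V] [NormedSpace ℝ V]
  {ν : ℝ} {A : V →L[ℝ] V →L[ℝ] ℝ} {B : V →ₗ[ℝ] V →ₗ[ℝ] V →L[ℝ] ℝ}

theorem sub_apply_sub_eq (hA : ∀ w, A w w = -ν * ‖w‖ ^ 2) (hB : ∀ u v, B u v v = 0) (u v : V) :
    ((A u - B u u) - (A v - B v v)) (u - v) = -ν * ‖u - v‖ ^ 2 - B (u - v) u (u - v) := by
  have hBuv : B u u - B v v = B (u - v) u + B v (u - v) := by
    simp only [map_sub, LinearMap.sub_apply]; abel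
  calc ((A u - B u u) - (A v - B v v)) (u - v)
      = A (u - v) (u - v) - (B u u - B v v) (u - v) := by
        simp only [map_sub, sub_apply]; ring
    _ = -ν * ‖u - v‖ ^ 2 - B (u - v) u (u - v) := by
        rw [hA, hBuv, add_apply, hB, add_zero]

theorem two_mul_sub_apply_sub_le {H : Type*} [NormedAddCommGroup H] [NormedSpace ℝ H]
    {ι : V →L[ℝ] H} {C : ℝ} (hν : 0 < ν) (hA : ∀ w, A w w = -ν * ‖w‖ ^ 2)
    (hB : ∀ u v, B u v v = 0) (hBbound : ∀ u v, |B u v u| ≤ C * ‖ι u‖ * ‖u‖ * ‖v‖) (u v : V) :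
    2 * ((A u - B u u) - (A v - B v v)) (u - v) ≤
      C ^ 2 / (2 * ν) * ‖u‖ ^ 2 * ‖ι (u - v)‖ ^ 2 := by
  have hB' : -B (u - v) u (u - v) ≤ C * ‖ι (u - v)‖ * ‖u - v‖ * ‖u‖ :=
    (neg_le_abs _).trans (hBbound (u - v) u)
  rw [sub_apply_sub_eq hA hB, div_mul_eq_mul_div, div_mul_eq_mul_div,
    le_div_iff₀ (by positivity)]
  nlinarith [sq_nonneg (2 * ν * ‖u - v‖ - C * ‖ι (u - v)‖ * ‖u‖)]

end NavierStokesType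

theorem stmt12_general (V H : Type*) [NormedAddCommGroup V] [NormedSpace ℝ V]
    [NormedAddCommGroup H] [InnerProductSpace ℝ H]
    (ι : V →L[ℝ] H) (hι : Function.Injective ι)
    (J : H →L[ℝ] (V →L[ℝ] ℝ))
    (hJ : ∀ (h : H) (w : V), J h w = inner ℝ h (ι w))
    (ν : ℝ) (hν : 0 < ν)
    (A : V →L[ℝ] (V →L[ℝ] ℝ)) (hA : ∀ w : V, A w w = -ν * ‖w‖^2)
    (B : V →ₗ[ℝ] V →ₗ[ℝ] (V →L[ℝ] ℝ))
    (hBcancel : ∀ u v : V, B u v v = 0)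
    (C : ℝ) (hBbound : ∀ u v : V, |B u v u| ≤ C * ‖ι u‖ * ‖u‖ * ‖v‖)
    (T : ℝ)
    (u v : ℝ → V)
    (hu_cont : ContinuousOn (fun t => ι (u t)) (Set.Icc 0 T))
    (hv_cont : ContinuousOn (fun t => ι (v t)) (Set.Icc 0 T))
    (hu_L2 : IntervalIntegrable (fun t => ‖u t‖^2) volume 0 T)
    (hu_eq : ∀ t ∈ Set.Ioo 0 T,
      HasDerivAt (fun s => J (ι (u s))) (A (u t) - B (u t) (u t)) t)
    (hv_eq : ∀ t ∈ Set.Ioo 0 T,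
      HasDerivAt (fun s => J (ι (v s))) (A (v t) - B (v t) (v t)) t)
    (h0 : u 0 = v 0) :
    ∀ t ∈ Set.Icc 0 T, u t = v t := by
  have hdini : ∀ t ∈ Ioo 0 T, UpperLeftDiniLE (fun s => ‖ι (u s) - ι (v s)‖ ^ 2) t
      (C ^ 2 / (2 * ν) * ‖u t‖ ^ 2 * ‖ι (u t) - ι (v t)‖ ^ 2) := by
    intro t ht
    have hD : HasDerivAt (fun s => J (ι (u s) - ι (v s)))
        ((A (u t) - B (u t) (u t)) - (A (v t) - B (v t) (v t))) t := by
      simp only [map_sub]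
      exact (hu_eq t ht).sub (hv_eq t ht)
    refine (upperLeftDiniLE_norm_sq_of_hasDerivAt hJ hD (map_sub ι _ _).symm).mono ?_
    simpa only [map_sub] using two_mul_sub_apply_sub_le hν hA hBcancel hBbound (u t) (v t)
  have hzero := eqOn_zero_of_upperLeftDiniLE_mul ((hu_cont.sub hv_cont).norm.pow 2)
    (fun _ _ => sq_nonneg _) (by simp [h0]) (hu_L2.const_mul (C ^ 2 / (2 * ν)))
    (fun _ _ => by positivity) hdini
  intro t ht
  exact hι (sub_eq_zero.1 (by simpa using hzero ht))

/-- abstract uniqueness via the 2D-type estimate.  V ⊂ H ⊂ V' is a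
Gelfand triple: V (modeling H¹) embeds in the Hilbert space H (modeling L²) via ι,
and V' is modeled as the dual V →L[ℝ] ℝ; H embeds in V' via J h = ⟨h, ι ·⟩_H.
A : V → V' satisfies ⟨Au, u⟩ = −ν‖u‖_V² (e.g. A = νΔ), B̃ is bilinear with
⟨B̃(u,v),v⟩ = 0 and |⟨B̃(u,v),u⟩| ≤ C‖u‖_H‖u‖_V‖v‖_V.  If u, v ∈ C([0,T];H) ∩
L²(0,T;V) solve ∂ₜu + B̃(u,u) = νΔu in V' with ∂ₜu, ∂ₜv ∈ L²(0,T;V') and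
u(0) = v(0), then u ≡ v on [0,T]. -/
theorem stmt12 (V H : Type*) [NormedAddCommGroup V] [NormedSpace ℝ V]
    [NormedAddCommGroup H] [InnerProductSpace ℝ H]
    (ι : V →L[ℝ] H) (hι : Function.Injective ι)
    (J : H →L[ℝ] (V →L[ℝ] ℝ))
    (hJ : ∀ (h : H) (w : V), J h w = inner ℝ h (ι w))
    (ν : ℝ) (hν : 0 < ν)
    (A : V →L[ℝ] (V →L[ℝ] ℝ)) (hA : ∀ w : V, A w w = -ν * ‖w‖^2)
    (B : V →ₗ[ℝ] V →ₗ[ℝ] (V →L[ℝ] ℝ))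
    (hBcancel : ∀ u v : V, B u v v = 0)
    (C : ℝ) (hBbound : ∀ u v : V, |B u v u| ≤ C * ‖ι u‖ * ‖u‖ * ‖v‖)
    (T : ℝ) (hT : 0 < T)
    (u v : ℝ → V)
    (hu_cont : ContinuousOn (fun t => ι (u t)) (Set.Icc 0 T))
    (hv_cont : ContinuousOn (fun t => ι (v t)) (Set.Icc 0 T))
    (hu_L2 : IntervalIntegrable (fun t => ‖u t‖^2) volume 0 T)
    (hv_L2 : IntervalIntegrable (fun t => ‖v t‖^2) volume 0 T)
    (hu_eq : ∀ t ∈ Set.Ioo 0 T,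
      HasDerivAt (fun s => J (ι (u s))) (A (u t) - B (u t) (u t)) t)
    (hv_eq : ∀ t ∈ Set.Ioo 0 T,
      HasDerivAt (fun s => J (ι (v s))) (A (v t) - B (v t) (v t)) t)
    (hu_dt_L2 : IntervalIntegrable (fun t => ‖A (u t) - B (u t) (u t)‖^2) volume 0 T)
    (hv_dt_L2 : IntervalIntegrable (fun t => ‖A (v t) - B (v t) (v t)‖^2) volume 0 T)
    (h0 : u 0 = v 0) :
    ∀ t ∈ Set.Icc 0 T, u t = v t :=
  stmt12_general V H ι hι J hJ ν hν A hA B hBcancel C hBbound T u v hu_cont hv_cont hu_L2 hu_eq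
    hv_eq h0
end
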